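/- arXiv:2002.03694 — 7 statements merged into one kernel-verified Lean document; each statement's English description precedes it below -/
import Mathlib

section
/- Let P be an n×n positive definite matrix and let D, X be n×m complex matrices such that D has linearly independent columns. Then the solution S of the constrained optimization problem: minimize the Frobenius norm ‖S‖_F subject to S·(P·D) = P·X + P·D, is given by S = P·S̃·P⁻¹ where S̃ = (X + D)·(D*·P²·D)⁻¹·D*·P². -/
/-!
With `A = P D` and `B = P X + P D`, the matrix `S = P S̃ P⁻¹` simplifies to `B (Aᴴ A)⁻¹ Aᴴ`, which
solves `S A = B` and has the form `C Aᴴ`. Any other solution is `S + E` with `E A = 0`,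
hence `S Eᴴ = 0`, so `(S + E)(S + E)ᴴ = S Sᴴ + E Eᴴ` and taking traces gives
`‖S + E‖_F² = ‖S‖_F² + ‖E‖_F²`.
-/

open Matrix
open scoped ComplexOrder

noncomputable def frobNorm {n m : ℕ} (S : Matrix (Fin n) (Fin m) ℂ) : ℝ :=
  Real.sqrt (∑ i, ∑ j, ‖S i j‖ ^ 2)

theorem sum_sq_norm_eq_re_trace_mul_conjTranspose {n m : ℕ} (S : Matrix (Fin n) (Fin m) ℂ) :
    ∑ i, ∑ j, ‖S i j‖ ^ 2 = (S * Sᴴ).trace.re := by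
  simp only [trace, diag_apply, mul_apply, conjTranspose_apply, Complex.re_sum,
    Complex.mul_conj', RCLike.star_def]
  norm_cast

theorem add_mul_conjTranspose_add_of_mul_conjTranspose_eq_zero {R : Type*} [Ring R] [StarRing R]
    {n m : Type*} [Fintype m] {S E : Matrix n m R} (h : S * Eᴴ = 0) :
    (S + E) * (S + E)ᴴ = S * Sᴴ + E * Eᴴ := by
  have h' : E * Sᴴ = 0 := by simpa using congrArg conjTranspose h
  rw [conjTranspose_add, Matrix.add_mul, Matrix.mul_add, Matrix.mul_add, h, h']
  abel

theorem frobNorm_le_frobNorm_add {n m : ℕ} {S E : Matrix (Fin n) (Fin m) ℂ} (h : S * Eᴴ = 0) :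
    frobNorm S ≤ frobNorm (S + E) := by
  unfold frobNorm
  apply Real.sqrt_le_sqrt
  rw [sum_sq_norm_eq_re_trace_mul_conjTranspose, sum_sq_norm_eq_re_trace_mul_conjTranspose,
    add_mul_conjTranspose_add_of_mul_conjTranspose_eq_zero h, trace_add, Complex.add_re,
    ← sum_sq_norm_eq_re_trace_mul_conjTranspose E]
  have : 0 ≤ ∑ i, ∑ j, ‖E i j‖ ^ 2 := by positivity
  linarith

theorem frobNorm_mul_conjTranspose_le {n m k : ℕ} {A : Matrix (Fin n) (Fin m) ℂ}
    {C : Matrix (Fin k) (Fin m) ℂ} {S : Matrix (Fin k) (Fin n) ℂ} (h : S * A = C * Aᴴ * A) :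
    frobNorm (C * Aᴴ) ≤ frobNorm S := by
  have hE : (C * Aᴴ) * (S - C * Aᴴ)ᴴ = 0 := by
    have : Aᴴ * (S - C * Aᴴ)ᴴ = 0 := by
      rw [← conjTranspose_mul, Matrix.sub_mul, h, sub_self, conjTranspose_zero]
    rw [Matrix.mul_assoc, this, Matrix.mul_zero]
  simpa using frobNorm_le_frobNorm_add hE

def IsMinFrobNormSolution {n m k : ℕ} (S : Matrix (Fin k) (Fin n) ℂ)
    (A : Matrix (Fin n) (Fin m) ℂ) (B : Matrix (Fin k) (Fin m) ℂ) : Prop :=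
  S * A = B ∧ ∀ S' : Matrix (Fin k) (Fin n) ℂ, S' * A = B → frobNorm S ≤ frobNorm S'

theorem isUnit_det_conjTranspose_mul_self {𝕜 : Type*} [RCLike 𝕜] {n m : Type*} [Fintype n]
    [Fintype m] [DecidableEq m] {A : Matrix n m 𝕜} (hA : Function.Injective A.mulVec) :
    IsUnit (Aᴴ * A).det := by
  classical
  simpa using (PosDef.one.conjTranspose_mul_mul_same hA).isUnit.map detMonoidHom

theorem isMinFrobNormSolution_mul_inv_conjTranspose_mul_self {n m k : ℕ}
    {A : Matrix (Fin n) (Fin m) ℂ} (hA : Function.Injective A.mulVec)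
    (B : Matrix (Fin k) (Fin m) ℂ) :
    IsMinFrobNormSolution (B * (Aᴴ * A)⁻¹ * Aᴴ) A B := by
  have hsol : B * (Aᴴ * A)⁻¹ * Aᴴ * A = B := by
    rw [Matrix.mul_assoc _ Aᴴ, Matrix.mul_assoc,
      nonsing_inv_mul _ (isUnit_det_conjTranspose_mul_self hA), Matrix.mul_one]
  exact ⟨hsol, fun S' hS' => frobNorm_mul_conjTranspose_le (hS'.trans hsol.symm)⟩

/-- The minimizer of `‖S‖_F` subject to `S (P D) = P X + P D` is `P S̃ P⁻¹`,
where `S̃ = (X + D) (Dᴴ P² D)⁻¹ Dᴴ P²`. -/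
theorem stmt0 {n m : ℕ} (P : Matrix (Fin n) (Fin n) ℂ) (hP : P.PosDef)
    (D X : Matrix (Fin n) (Fin m) ℂ) (hD : LinearIndependent ℂ Dᵀ)
    (Stil S : Matrix (Fin n) (Fin n) ℂ)
    (hStil : Stil = (X + D) * (Dᴴ * (P * P) * D)⁻¹ * Dᴴ * (P * P))
    (hS : S = P * Stil * P⁻¹) :
    S * (P * D) = P * X + P * D ∧
      ∀ S' : Matrix (Fin n) (Fin n) ℂ,
        S' * (P * D) = P * X + P * D → frobNorm S ≤ frobNorm S' := by
  have hPH : Pᴴ = P := hP.isHermitian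
  have hPD : Function.Injective (P * D).mulVec := by
    have : (P * D).mulVec = P.mulVec ∘ D.mulVec := funext fun v => (mulVec_mulVec v P D).symm
    exact this ▸ (mulVec_injective_iff_isUnit.2 hP.isUnit).comp (mulVec_injective_iff.2 hD)
  have hSeq : S = (P * X + P * D) * ((P * D)ᴴ * (P * D))⁻¹ * (P * D)ᴴ := by
    rw [hS, hStil, conjTranspose_mul, hPH, ← Matrix.mul_add]
    simp only [Matrix.mul_assoc]
    rw [mul_nonsing_inv _ ((isUnit_iff_isUnit_det P).1 hP.isUnit), Matrix.mul_one]
  exact hSeq ▸ isMinFrobNormSolution_mul_inv_conjTranspose_mul_self hPD (P * X + P * D)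
end

section
/- Let A = W·Λ·W* be an n×n real symmetric matrix with orthogonal eigenvector matrix W and diagonal Λ, and suppose 0 and 1 are not eigenvalues of A. Let x* satisfy x* = A·x* + b, define errors e_j = x_j − x* with x_{j+1} = A·x_j + b for 0 ≤ j ≤ k−1 (k ≥ m). If x_{k+1} is produced by one step of Anderson acceleration in the ℓ² norm with memory m (i.e., x_{k+1} = x_k + (I − S_k)·f_k with S_k = (D_k + X_k)(D_k*D_k)⁻¹D_k*, where D_k and X_k have columns Δf_{k−m+i} and Δx_{k−m+i}), then e_{k+1} = W·E·W*·A·e_k where E = D_μ·(I − K_H(K_H*K_H)⁻¹K_H*)·D_μ⁻¹, with D_μ = Λ(Λ − I)⁻¹, H = (Λ − I)²·Λ^{k−m}, and K_H = K_m(Λ, H·W*·e_0) the Krylov matrix with columns Λ^{j}·H·W*·e_0 for j = 0,…,m−1. -/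
/-!
Write `e_j = x_j - x*`. Below step `k` the iteration is linear in the error, `e_j = A^j e_0`, and
the residual is `f_j = (A - 1) e_j`. Hence `X_k` is the Krylov matrix `K_m(A, (A - 1) A^(k-m) e_0)`
and `D_k = (A - 1) X_k`, so `D_k + X_k = A (A - 1)⁻¹ D_k`. The Anderson step then reads
`e_{k+1} = A (A - 1)⁻¹ (1 - P) (A - 1) e_k` with `P = D_k (D_kᵀ D_k)⁻¹ D_kᵀ`.
Finally `Wᵀ D_k = K_H`, and conjugating by the orthogonal `W` turns `P` into
`K_H (K_Hᵀ K_H)⁻¹ K_Hᵀ` and `A (A - 1)⁻¹` into `D_μ`, while `D_μ⁻¹ Λ = Λ - 1`.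
-/

open Matrix

section AndersonAcceleration

variable {ι R : Type*} [Fintype ι] [DecidableEq ι] [CommRing R]

def krylovMatrix (M : Matrix ι ι R) (v : ι → R) (m : ℕ) : Matrix ι (Fin m) R :=
  of fun i j => (M ^ (j : ℕ) *ᵥ v) i

theorem mul_krylovMatrix_of_semiconjBy {T M N : Matrix ι ι R} (h : SemiconjBy T M N)
    (v : ι → R) (m : ℕ) : T * krylovMatrix M v m = krylovMatrix N (T *ᵥ v) m := by
  ext i j
  change (T *ᵥ (M ^ (j : ℕ) *ᵥ v)) i = (N ^ (j : ℕ) *ᵥ (T *ᵥ v)) i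
  rw [mulVec_mulVec, mulVec_mulVec, (h.pow_right j).eq]

section Picard

variable {A : Matrix ι ι R} {b xstar : ι → R} {x : ℕ → ι → R} {k : ℕ}

theorem picard_error_eq (hfix : xstar = A *ᵥ xstar + b)
    (hx : ∀ j < k, x (j + 1) = A *ᵥ x j + b) :
    ∀ j ≤ k, x j - xstar = A ^ j *ᵥ (x 0 - xstar) := by
  have hb : b = xstar - A *ᵥ xstar := eq_sub_of_add_eq' hfix.symm
  intro j
  induction j with
  | zero => simp
  | succ j ih =>
    intro hj
    rw [hx j hj, pow_succ', ← mulVec_mulVec, ← ih (by omega), mulVec_sub, hb]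
    abel

theorem picard_differences_eq_krylovMatrix (hfix : xstar = A *ᵥ xstar + b)
    (hx : ∀ j < k, x (j + 1) = A *ᵥ x j + b) {s m : ℕ} (hsm : s + m ≤ k) :
    (of fun i (l : Fin m) => x (s + l + 1) i - x (s + l) i) =
      krylovMatrix A (((A - 1) * A ^ s) *ᵥ (x 0 - xstar)) m := by
  ext i l
  have hpow : A ^ (s + l + 1) - A ^ (s + l) = A ^ (l : ℕ) * ((A - 1) * A ^ s) := by
    rw [sub_mul, one_mul, mul_sub, ← pow_succ', ← pow_add, ← pow_add]
    congr 2 <;> omega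
  have hcol : x (s + l + 1) - x (s + l) =
      (A ^ (l : ℕ) * ((A - 1) * A ^ s)) *ᵥ (x 0 - xstar) := by
    rw [← hpow, sub_mulVec, ← picard_error_eq hfix hx _ (by omega),
      ← picard_error_eq hfix hx _ (by omega), sub_sub_sub_cancel_right]
  rw [of_apply, krylovMatrix, of_apply, mulVec_mulVec, ← hcol]
  rfl

theorem picard_residual_eq (f : ℕ → ι → R) (hfix : xstar = A *ᵥ xstar + b)
    (hf : ∀ j, f j = A *ᵥ x j + b - x j) (j : ℕ) : f j = (A - 1) *ᵥ (x j - xstar) := by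
  rw [hf, sub_mulVec, one_mulVec, mulVec_sub, eq_sub_of_add_eq' hfix.symm]
  abel

theorem residual_differences_eq_mul {m s : ℕ} (f : ℕ → ι → R)
    (hf : ∀ j, f j = A *ᵥ x j + b - x j) :
    (of fun i (l : Fin m) => f (s + l + 1) i - f (s + l) i) =
      (A - 1) * of fun i (l : Fin m) => x (s + l + 1) i - x (s + l) i := by
  ext i l
  rw [of_apply, hf, hf]
  change _ = ((A - 1) *ᵥ (x (s + l + 1) - x (s + l))) i
  rw [mulVec_sub, sub_mulVec, sub_mulVec, one_mulVec, one_mulVec]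
  simp only [Pi.sub_apply, Pi.add_apply]
  ring

end Picard

theorem anderson_update_eq {κ : Type*} [Fintype κ] [DecidableEq κ] {A : Matrix ι ι R}
    (hA : IsUnit (A - 1).det) {D X : Matrix ι κ R} (hD : D = (A - 1) * X) (G : Matrix κ κ R) :
    1 + (1 - (D + X) * G * Dᵀ) * (A - 1) = A * (A - 1)⁻¹ * (1 - D * G * Dᵀ) * (A - 1) := by
  have hDX : D + X = A * (A - 1)⁻¹ * D := by
    rw [hD, Matrix.mul_assoc, ← Matrix.mul_assoc (A - 1)⁻¹, nonsing_inv_mul _ hA,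
      Matrix.one_mul, Matrix.sub_mul, Matrix.one_mul, sub_add_cancel]
  rw [hDX]
  -- keeps `simp` from distributing over `A - 1`, so that `(A - 1)⁻¹ * (A - 1)` cancels
  set B := A - 1 with hB
  simp only [Matrix.mul_sub, Matrix.sub_mul, Matrix.mul_one, Matrix.one_mul, Matrix.mul_assoc,
    nonsing_inv_mul _ hA]
  rw [hB]
  abel

section Conjugation

variable {W : Matrix ι ι R}

theorem conj_mul_conj_of_orthogonal (hW : Wᵀ * W = 1) (M N : Matrix ι ι R) :
    W * M * Wᵀ * (W * N * Wᵀ) = W * (M * N) * Wᵀ := by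
  simp only [mul_assoc]
  rw [← mul_assoc Wᵀ W, hW, one_mul]

theorem conj_sub_one_of_orthogonal (hW : W * Wᵀ = 1) (M : Matrix ι ι R) :
    W * (M - 1) * Wᵀ = W * M * Wᵀ - 1 := by
  rw [mul_sub, sub_mul, mul_one, hW]

theorem inv_conj_of_orthogonal (hW₁ : Wᵀ * W = 1) (hW₂ : W * Wᵀ = 1) (M : Matrix ι ι R) :
    (W * M * Wᵀ)⁻¹ = W * M⁻¹ * Wᵀ := by
  rw [Matrix.mul_inv_rev, Matrix.mul_inv_rev, inv_eq_left_inv hW₂, inv_eq_left_inv hW₁,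
    mul_assoc]

theorem det_conj_of_orthogonal (hW : Wᵀ * W = 1) (M : Matrix ι ι R) :
    (W * M * Wᵀ).det = M.det := by
  rw [← inv_eq_left_inv hW,
    det_conj ((isUnit_iff_isUnit_det W).mpr (isUnit_det_of_left_inverse hW))]

theorem conj_projection_of_orthogonal {κ : Type*} [Fintype κ] [DecidableEq κ]
    (hW : W * Wᵀ = 1) (D : Matrix ι κ R) :
    W * (Wᵀ * D * ((Wᵀ * D)ᵀ * (Wᵀ * D))⁻¹ * (Wᵀ * D)ᵀ) * Wᵀ = D * (Dᵀ * D)⁻¹ * Dᵀ := by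
  have hgram : (Wᵀ * D)ᵀ * (Wᵀ * D) = Dᵀ * D := by
    rw [transpose_mul, transpose_transpose, Matrix.mul_assoc, ← Matrix.mul_assoc W, hW,
      Matrix.one_mul]
  rw [hgram, transpose_mul, transpose_transpose]
  simp only [Matrix.mul_assoc]
  rw [hW, Matrix.mul_one, ← Matrix.mul_assoc W, hW, Matrix.one_mul]

theorem conj_anderson_error_of_orthogonal {Λ A : Matrix ι ι R} (hW₁ : Wᵀ * W = 1)
    (hW₂ : W * Wᵀ = 1) (hA : A = W * Λ * Wᵀ) (hΛ : IsUnit Λ.det) (hΛ₁ : IsUnit (Λ - 1).det)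
    (Q : Matrix ι ι R) :
    W * (Λ * (Λ - 1)⁻¹ * (1 - Q) * (Λ * (Λ - 1)⁻¹)⁻¹) * Wᵀ * A =
      A * (A - 1)⁻¹ * (1 - W * Q * Wᵀ) * (A - 1) := by
  have hΛinv : (Λ * (Λ - 1)⁻¹)⁻¹ * Λ = Λ - 1 := by
    rw [Matrix.mul_inv_rev, nonsing_inv_nonsing_inv _ hΛ₁, mul_assoc, nonsing_inv_mul _ hΛ,
      mul_one]
  have hA₁ : A - 1 = W * (Λ - 1) * Wᵀ := by rw [hA, conj_sub_one_of_orthogonal hW₂]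
  have hQ : 1 - W * Q * Wᵀ = W * (1 - Q) * Wᵀ := by rw [mul_sub, sub_mul, mul_one, hW₂]
  calc W * (Λ * (Λ - 1)⁻¹ * (1 - Q) * (Λ * (Λ - 1)⁻¹)⁻¹) * Wᵀ * A
      = W * (Λ * (Λ - 1)⁻¹ * (1 - Q) * (Λ - 1)) * Wᵀ := by
        rw [hA, conj_mul_conj_of_orthogonal hW₁, mul_assoc _ _ Λ, hΛinv]
    _ = W * Λ * Wᵀ * (W * (Λ - 1)⁻¹ * Wᵀ) * (W * (1 - Q) * Wᵀ) * (W * (Λ - 1) * Wᵀ) := by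
        simp only [conj_mul_conj_of_orthogonal hW₁]
    _ = A * (A - 1)⁻¹ * (1 - W * Q * Wᵀ) * (A - 1) := by
        rw [hA₁, inv_conj_of_orthogonal hW₁ hW₂, hQ, hA]

end Conjugation

end AndersonAcceleration

theorem stmt3_general {n m k : ℕ} (hmk : m ≤ k)
    (W Λ A : Matrix (Fin n) (Fin n) ℝ) (d : Fin n → ℝ)
    (hΛ : Λ = Matrix.diagonal d)
    (hW1 : Wᵀ * W = 1) (hW2 : W * Wᵀ = 1)
    (hA : A = W * Λ * Wᵀ)
    (hd0 : ∀ i, d i ≠ 0) (hd1 : ∀ i, d i ≠ 1)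
    (b xstar : Fin n → ℝ) (hfix : xstar = A.mulVec xstar + b)
    (x : ℕ → Fin n → ℝ)
    (hx : ∀ j < k, x (j + 1) = A.mulVec (x j) + b)
    (f : ℕ → Fin n → ℝ)
    (hf : ∀ j, f j = A.mulVec (x j) + b - x j)
    (Dk Xk : Matrix (Fin n) (Fin m) ℝ)
    (hDk : Dk = Matrix.of fun i (l : Fin m) => f (k - m + l + 1) i - f (k - m + l) i)
    (hXk : Xk = Matrix.of fun i (l : Fin m) => x (k - m + l + 1) i - x (k - m + l) i)
    (Sk : Matrix (Fin n) (Fin n) ℝ)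
    (hSk : Sk = (Dk + Xk) * (Dkᵀ * Dk)⁻¹ * Dkᵀ)
    (hxk1 : x (k + 1) = x k + (1 - Sk).mulVec (f k))
    (H Dμ : Matrix (Fin n) (Fin n) ℝ)
    (hH : H = (Λ - 1) ^ 2 * Λ ^ (k - m))
    (hDμ : Dμ = Λ * (Λ - 1)⁻¹)
    (KH : Matrix (Fin n) (Fin m) ℝ)
    (hKH : KH = Matrix.of fun i (j : Fin m) =>
      (Λ ^ (j : ℕ)).mulVec (H.mulVec (Wᵀ.mulVec (x 0 - xstar))) i)
    (E : Matrix (Fin n) (Fin n) ℝ)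
    (hE : E = Dμ * (1 - KH * (KHᵀ * KH)⁻¹ * KHᵀ) * Dμ⁻¹) :
    x (k + 1) - xstar = (W * E * Wᵀ * A).mulVec (x k - xstar) := by
  have hΛunit : IsUnit Λ.det := by
    rw [hΛ, det_diagonal]
    exact (Finset.prod_ne_zero_iff.mpr fun i _ => hd0 i).isUnit
  have hΛ₁unit : IsUnit (Λ - 1).det := by
    rw [hΛ, ← diagonal_one, diagonal_sub, det_diagonal]
    exact (Finset.prod_ne_zero_iff.mpr fun i _ => sub_ne_zero.mpr (hd1 i)).isUnit
  have hA₁unit : IsUnit (A - 1).det := by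
    rwa [hA, ← conj_sub_one_of_orthogonal hW2, det_conj_of_orthogonal hW1]
  have hWA : SemiconjBy Wᵀ A Λ := by
    rw [SemiconjBy, hA, ← mul_assoc, ← mul_assoc, hW1, one_mul]
  have hWH : Wᵀ * ((A - 1) * ((A - 1) * A ^ (k - m))) = H * Wᵀ := by
    rw [hH, ← mul_assoc (A - 1), ← sq]
    exact ((hWA.sub_right (.one_right _)).pow_right 2).mul_right (hWA.pow_right _)
  have hXkrylov : Xk = krylovMatrix A (((A - 1) * A ^ (k - m)) *ᵥ (x 0 - xstar)) m := by
    rw [hXk, picard_differences_eq_krylovMatrix hfix hx (by omega)]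
  have hDX : Dk = (A - 1) * Xk := by rw [hDk, hXk, residual_differences_eq_mul f hf]
  have hKHD : KH = Wᵀ * Dk := by
    have hcomm : Commute (A - 1) A := (Commute.refl A).sub_left (Commute.one_left A)
    rw [hDX, hXkrylov, ← Matrix.mul_assoc, mul_krylovMatrix_of_semiconjBy (hWA.mul_left hcomm),
      mulVec_mulVec, mul_assoc, hWH, ← mulVec_mulVec, hKH]
    rfl
  have hstep : x (k + 1) - xstar = (1 + (1 - Sk) * (A - 1)) *ᵥ (x k - xstar) := by
    rw [hxk1, picard_residual_eq f hfix hf k, add_mulVec, one_mulVec, mulVec_mulVec]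
    abel
  rw [hstep, hSk, anderson_update_eq hA₁unit hDX, hE, hDμ,
    conj_anderson_error_of_orthogonal hW1 hW2 hA hΛunit hΛ₁unit, hKHD,
    conj_projection_of_orthogonal hW2]

/-- One step of Anderson acceleration in the ℓ² norm after `k` Picard iterations:
`e_{k+1} = W E Wᵀ A e_k` with `E = D_μ (I - K_H (K_Hᵀ K_H)⁻¹ K_Hᵀ) D_μ⁻¹`. -/
theorem stmt3 {n m k : ℕ} (hm : 0 < m) (hmk : m ≤ k)
    (W Λ A : Matrix (Fin n) (Fin n) ℝ) (d : Fin n → ℝ)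
    (hΛ : Λ = Matrix.diagonal d)
    (hW1 : Wᵀ * W = 1) (hW2 : W * Wᵀ = 1)
    (hA : A = W * Λ * Wᵀ)
    (hd0 : ∀ i, d i ≠ 0) (hd1 : ∀ i, d i ≠ 1)
    (b xstar : Fin n → ℝ) (hfix : xstar = A.mulVec xstar + b)
    (x : ℕ → Fin n → ℝ)
    (hx : ∀ j < k, x (j + 1) = A.mulVec (x j) + b)
    (f : ℕ → Fin n → ℝ)
    (hf : ∀ j, f j = A.mulVec (x j) + b - x j)
    (Dk Xk : Matrix (Fin n) (Fin m) ℝ)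
    (hDk : Dk = Matrix.of fun i (l : Fin m) => f (k - m + l + 1) i - f (k - m + l) i)
    (hXk : Xk = Matrix.of fun i (l : Fin m) => x (k - m + l + 1) i - x (k - m + l) i)
    (hDkinv : IsUnit (Dkᵀ * Dk).det)
    (Sk : Matrix (Fin n) (Fin n) ℝ)
    (hSk : Sk = (Dk + Xk) * (Dkᵀ * Dk)⁻¹ * Dkᵀ)
    (hxk1 : x (k + 1) = x k + (1 - Sk).mulVec (f k))
    (H Dμ : Matrix (Fin n) (Fin n) ℝ)
    (hH : H = (Λ - 1) ^ 2 * Λ ^ (k - m))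
    (hDμ : Dμ = Λ * (Λ - 1)⁻¹)
    (KH : Matrix (Fin n) (Fin m) ℝ)
    (hKH : KH = Matrix.of fun i (j : Fin m) =>
      (Λ ^ (j : ℕ)).mulVec (H.mulVec (Wᵀ.mulVec (x 0 - xstar))) i)
    (E : Matrix (Fin n) (Fin n) ℝ)
    (hE : E = Dμ * (1 - KH * (KHᵀ * KH)⁻¹ * KHᵀ) * Dμ⁻¹) :
    x (k + 1) - xstar = (W * E * Wᵀ * A).mulVec (x k - xstar) :=
  stmt3_general hmk W Λ A d hΛ hW1 hW2 hA hd0 hd1 b xstar hfix x hx f hf Dk Xk hDk hXk Sk hSk hxk1 H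
    Dμ hH hDμ KH hKH E hE
end

section
/- Under the setup of the one-step Anderson acceleration lemma (A = WΛW* real symmetric with eigenvalues in [a,b] not containing 0 or 1; x_{j+1} = A·x_j + b for j < k; x_{k+1} from one step of AA with memory m in the ℓ² norm), the following bound holds: ‖D_μ⁻¹·W*·e_{k+1}‖₂ ≤ C(a,b,m)·‖D_μ⁻¹·W*·A·e_k‖₂, where D_μ = Λ(Λ − I)⁻¹ and C(a,b,m) = |T_m((2ab − a − b)/(b − a))|⁻¹ with T_m the degree-m Chebyshev polynomial of the first kind. -/
/-!
Since `f_j = (A - 1) e_j` and `D_k = (A - 1) X_k`, the AA step gives `e_{k+1} = A (e_k - X_k γ)`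
and `f_k - D_k γ = (A - 1) (e_k - X_k γ)`. As `D_μ⁻¹ Wᵀ A = Wᵀ (A - 1)` and `Wᵀ` is an isometry,
the claim becomes `‖f_k - D_k γ‖ ≤ C ‖f_k‖`. The residuals of the fixed-point iteration form a
Krylov sequence `f_{k-m+l} = A^l f_{k-m}`, so `f_k - D_k c` runs over all `P(A) f_{k-m}` with
`deg P ≤ m` and `P(1) = 1`, and the least-squares coefficients `γ` do at least as well as any such
`P`. Taking for `P` a reversed, rescaled Chebyshev polynomial gives `|P(t)| ≤ C |t^m|` on `[a, b]`,
and diagonalising `A` turns this into `‖P(A) f_{k-m}‖ ≤ C ‖A^m f_{k-m}‖`.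
-/

open Matrix

/-- Euclidean norm of a vector. -/
noncomputable def enorm2 {n : ℕ} (v : Fin n → ℝ) : ℝ :=
  Real.sqrt (∑ i, v i ^ 2)

open Polynomial

lemma eval_reflect_of_natDegree_le {K : Type*} [Field K] {Q : K[X]} {N : ℕ}
    (hQ : Q.natDegree ≤ N) {t : K} (ht : t ≠ 0) : (reflect N Q).eval t = t ^ N * Q.eval t⁻¹ := by
  have : Invertible t⁻¹ := invertibleOfNonzero (inv_ne_zero ht)
  have := eval₂_reflect_mul_pow (RingHom.id K) t⁻¹ N Q hQ
  rw [invOf_eq_inv, inv_inv] at this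
  rw [eval, eval, ← this, inv_pow]
  field_simp

lemma sub_mul_sub_pos_of_notMem_Icc {a b c : ℝ} (hab : a ≤ b) (hc : c ∉ Set.Icc a b) :
    0 < (a - c) * (b - c) := by
  simp only [Set.mem_Icc, not_and_or, not_le] at hc
  rcases hc with h | h
  · exact mul_pos (by linarith) (by linarith)
  · exact mul_pos_of_neg_of_neg (by linarith) (by linarith)

lemma sq_affine_sub_one {a b : ℝ} (hab : a ≠ b) (u : ℝ) :
    ((2 * a * b * u - a - b) / (b - a)) ^ 2 - 1 =
      4 * (a * b) * ((a * u - 1) * (b * u - 1)) / (b - a) ^ 2 := by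
  have : b - a ≠ 0 := sub_ne_zero.mpr hab.symm
  field_simp
  ring

lemma one_le_abs_affine_of_notMem_Icc {a b : ℝ} (hab : a < b) (h0 : (0 : ℝ) ∉ Set.Icc a b)
    (h1 : (1 : ℝ) ∉ Set.Icc a b) : 1 ≤ |(2 * a * b - a - b) / (b - a)| := by
  have hab0 : 0 < a * b := by simpa using sub_mul_sub_pos_of_notMem_Icc hab.le h0
  have hab1 := sub_mul_sub_pos_of_notMem_Icc hab.le h1
  have := sq_affine_sub_one hab.ne 1
  simp only [mul_one] at this
  refine (one_le_sq_iff_one_le_abs _).mp (sub_nonneg.mp ?_)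
  rw [this]
  positivity

lemma abs_affine_inv_le_one_of_mem_Icc {a b t : ℝ} (hab : a < b) (h0 : (0 : ℝ) ∉ Set.Icc a b)
    (ht : t ∈ Set.Icc a b) : |(2 * a * b * t⁻¹ - a - b) / (b - a)| ≤ 1 := by
  have hab0 : 0 < a * b := by simpa using sub_mul_sub_pos_of_notMem_Icc hab.le h0
  have ht0 : t ≠ 0 := by rintro rfl; exact h0 ht
  have hprod : (a * t⁻¹ - 1) * (b * t⁻¹ - 1) = (a - t) * (b - t) / t ^ 2 := by field_simp
  have hat : (a - t) * (b - t) ≤ 0 :=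
    mul_nonpos_of_nonpos_of_nonneg (by linarith [ht.1]) (by linarith [ht.2])
  refine (sq_le_one_iff_abs_le_one _).mp (sub_nonpos.mp ?_)
  rw [sq_affine_sub_one hab.ne, hprod]
  refine div_nonpos_of_nonpos_of_nonneg (mul_nonpos_of_nonneg_of_nonpos (by positivity) ?_)
    (by positivity)
  exact div_nonpos_of_nonpos_of_nonneg hat (by positivity)

/-- `P(t) = t ^ m T_m(σ(1/t)) / T_m(σ(1))`, where the affine map `σ` sends `1/a ↦ 1`, `1/b ↦ -1`. -/
lemma exists_natDegree_le_eval_one_abs_eval_le {a b : ℝ} (hab : a < b)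
    (h0 : (0 : ℝ) ∉ Set.Icc a b) (h1 : (1 : ℝ) ∉ Set.Icc a b) (m : ℕ) :
    ∃ P : ℝ[X], P.natDegree ≤ m ∧ P.eval 1 = 1 ∧ ∀ t ∈ Set.Icc a b,
      |P.eval t| ≤ |(Chebyshev.T ℝ m).eval ((2 * a * b - a - b) / (b - a))|⁻¹ * |t ^ m| := by
  set σ : ℝ[X] := C (2 * a * b / (b - a)) * X - C ((a + b) / (b - a))
  have hσ (u : ℝ) : σ.eval u = (2 * a * b * u - a - b) / (b - a) := by
    simp only [σ, eval_sub, eval_mul, eval_C, eval_X]; ring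
  set T0 := (Chebyshev.T ℝ m).eval ((2 * a * b - a - b) / (b - a))
  have hT0 : 1 ≤ |T0| :=
    Chebyshev.one_le_abs_eval_T_real m (one_le_abs_affine_of_notMem_Icc hab h0 h1)
  set Q := (Chebyshev.T ℝ m).comp σ
  have hQ : Q.natDegree ≤ m := by
    have hσ1 : σ.natDegree ≤ 1 := by simp only [σ]; compute_degree
    refine natDegree_comp_le.trans ?_
    rw [Chebyshev.natDegree_T, Int.natAbs_natCast]
    simpa using Nat.mul_le_mul_left m hσ1
  refine ⟨C T0⁻¹ * reflect m Q, ?_, ?_, fun t ht => ?_⟩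
  · exact (natDegree_C_mul_le _ _).trans (natDegree_reflect_le.trans (max_le le_rfl hQ))
  · rw [eval_mul, eval_C, eval_reflect_of_natDegree_le hQ one_ne_zero, inv_one, one_pow,
      one_mul, eval_comp, hσ, mul_one]
    exact inv_mul_cancel₀ (by rintro h; rw [h] at hT0; norm_num at hT0)
  · have ht0 : t ≠ 0 := by rintro rfl; exact h0 ht
    rw [eval_mul, eval_C, eval_reflect_of_natDegree_le hQ ht0, eval_comp, hσ, abs_mul, abs_mul,
      abs_inv]
    gcongr
    exact mul_le_of_le_one_right (abs_nonneg _)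
      (Chebyshev.abs_eval_T_real_le_one m (abs_affine_inv_le_one_of_mem_Icc hab h0 ht))

lemma of_mulVec_eq_sum {R ι κ : Type*} [CommSemiring R] [Fintype κ] (v : κ → ι → R)
    (c : κ → R) : (of fun i l => v l i) *ᵥ c = ∑ l, c l • v l := by
  ext i
  simp [mulVec, dotProduct, Finset.sum_apply, mul_comm]

lemma exists_pow_mulVec_sub_eq_aeval_mulVec {R ι : Type*} [CommRing R] [Nontrivial R]
    [Fintype ι] [DecidableEq ι] (A : Matrix ι ι R) (g : ι → R) {m : ℕ} {P : R[X]}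
    (hdeg : P.natDegree ≤ m) (h1 : P.eval 1 = 1) :
    ∃ c : Fin m → R, A ^ m *ᵥ g -
        (of fun i (l : Fin m) => (A ^ ((l : ℕ) + 1) *ᵥ g) i - (A ^ (l : ℕ) *ᵥ g) i) *ᵥ c =
      aeval A P *ᵥ g := by
  set r := (P - X ^ m) /ₘ (X - C 1)
  have hr : (X - C 1) * r = P - X ^ m :=
    mul_divByMonic_eq_iff_isRoot.mpr (by simp [h1])
  have hr_sum : aeval A r = ∑ l : Fin m, r.coeff l • A ^ (l : ℕ) := by
    rcases eq_or_ne r 0 with h | h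
    · simp [h]
    have : r.natDegree < m := by
      have := congrArg natDegree hr
      rw [(monic_X_sub_C 1).natDegree_mul' h, natDegree_X_sub_C] at this
      have := (natDegree_sub_le P (X ^ m)).trans (max_le hdeg (natDegree_X_pow_le m))
      omega
    rw [aeval_eq_sum_range' this, Fin.sum_univ_eq_sum_range (fun l => r.coeff l • A ^ l)]
  have hP : aeval A P = A ^ m + (A - 1) * aeval A r := by
    have := congrArg (aeval A) hr
    rw [map_mul, map_sub, map_sub, aeval_X, aeval_C, map_one, map_pow, aeval_X] at this
    rw [this, add_sub_cancel]
  refine ⟨fun l => -r.coeff l, ?_⟩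
  rw [of_mulVec_eq_sum, hP, add_mulVec, hr_sum, Finset.mul_sum, sum_mulVec, sub_eq_add_neg,
    ← Finset.sum_neg_distrib]
  congr 1
  refine Finset.sum_congr rfl fun l _ => ?_
  rw [mul_smul_comm, smul_mulVec, neg_smul, neg_neg, Matrix.sub_mul, Matrix.one_mul, ← pow_succ',
    sub_mulVec]
  rfl

section EuclideanNorm

variable {n : ℕ}

lemma enorm2_eq_sqrt_dotProduct (v : Fin n → ℝ) : enorm2 v = √(v ⬝ᵥ v) := by
  simp [enorm2, dotProduct, sq]

lemma enorm2_mulVec_of_transpose_mul_self {p : ℕ} {M : Matrix (Fin p) (Fin n) ℝ}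
    (hM : Mᵀ * M = 1) (v : Fin n → ℝ) : enorm2 (M *ᵥ v) = enorm2 v := by
  rw [enorm2_eq_sqrt_dotProduct, enorm2_eq_sqrt_dotProduct, dotProduct_mulVec,
    ← mulVec_transpose, mulVec_mulVec, hM, one_mulVec]

lemma enorm2_le_mul_of_abs_le {u v : Fin n → ℝ} {C : ℝ} (hC : 0 ≤ C)
    (h : ∀ i, |u i| ≤ C * |v i|) : enorm2 u ≤ C * enorm2 v := by
  rw [enorm2, enorm2, ← Real.sqrt_sq hC, ← Real.sqrt_mul (sq_nonneg C), Finset.mul_sum]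
  gcongr with i
  rw [← sq_abs (u i), ← sq_abs (v i), ← mul_pow]
  gcongr
  exact h i

lemma enorm2_sub_mulVec_leastSquares_le {ι : Type*} [Fintype ι] [DecidableEq ι]
    (D : Matrix (Fin n) ι ℝ) (hD : IsUnit (Dᵀ * D).det) (f : Fin n → ℝ) (c : ι → ℝ) :
    enorm2 (f - D *ᵥ (((Dᵀ * D)⁻¹ * Dᵀ) *ᵥ f)) ≤ enorm2 (f - D *ᵥ c) := by
  set γ := ((Dᵀ * D)⁻¹ * Dᵀ) *ᵥ f
  have hsplit : f - D *ᵥ c = (f - D *ᵥ γ) + D *ᵥ (γ - c) := by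
    rw [mulVec_sub]; abel
  set r := f - D *ᵥ γ
  have hr : Dᵀ *ᵥ r = 0 := by
    rw [mulVec_sub, mulVec_mulVec, mulVec_mulVec, ← Matrix.mul_assoc,
      mul_nonsing_inv _ hD, Matrix.one_mul, sub_self]
  have horth : r ⬝ᵥ D *ᵥ (γ - c) = 0 := by
    rw [dotProduct_mulVec, ← mulVec_transpose, hr, zero_dotProduct]
  rw [hsplit, enorm2_eq_sqrt_dotProduct, enorm2_eq_sqrt_dotProduct]
  gcongr
  rw [add_dotProduct, dotProduct_add, dotProduct_add, horth,
    dotProduct_comm (D *ᵥ (γ - c)) r, horth]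
  have : 0 ≤ D *ᵥ (γ - c) ⬝ᵥ D *ᵥ (γ - c) := Finset.sum_nonneg fun i _ => mul_self_nonneg _
  linarith

end EuclideanNorm

lemma mul_aeval_of_mul_eq_mul {R S : Type*} [CommSemiring R] [Semiring S] [Algebra R S]
    {u x y : S} (h : u * x = y * u) (p : R[X]) : u * aeval x p = aeval y p * u := by
  induction p using Polynomial.induction_on' with
  | add p q hp hq => rw [map_add, map_add, mul_add, add_mul, hp, hq]
  | monomial k a =>
    rw [aeval_monomial, aeval_monomial, ← Algebra.smul_def, ← Algebra.smul_def, mul_smul_comm,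
      smul_mul_assoc, (SemiconjBy.pow_right h k).eq]

lemma aeval_diagonal {R ι : Type*} [CommSemiring R] [Fintype ι] [DecidableEq ι] (d : ι → R)
    (p : R[X]) : aeval (diagonal d) p = diagonal fun i => p.eval (d i) := by
  rw [← diagonalAlgHom_apply (R := R), aeval_algHom_apply, aeval_pi_apply]
  rfl

section OrthogonalDiagonalization

variable {n : ℕ} {W : Matrix (Fin n) (Fin n) ℝ}

lemma enorm2_aeval_mulVec_le_of_abs_eval_le (hW1 : Wᵀ * W = 1) (hW2 : W * Wᵀ = 1)
    {d : Fin n → ℝ} {p q : ℝ[X]} {C : ℝ} (hC : 0 ≤ C)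
    (hpq : ∀ i, |p.eval (d i)| ≤ C * |q.eval (d i)|) (v : Fin n → ℝ) :
    enorm2 (aeval (W * diagonal d * Wᵀ) p *ᵥ v) ≤
      C * enorm2 (aeval (W * diagonal d * Wᵀ) q *ᵥ v) := by
  have hWA : Wᵀ * (W * diagonal d * Wᵀ) = diagonal d * Wᵀ := by
    rw [← Matrix.mul_assoc, ← Matrix.mul_assoc, hW1, Matrix.one_mul]
  have hcoord (r : ℝ[X]) : Wᵀ *ᵥ (aeval (W * diagonal d * Wᵀ) r *ᵥ v) =
      diagonal (fun i => r.eval (d i)) *ᵥ (Wᵀ *ᵥ v) := by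
    rw [mulVec_mulVec, mul_aeval_of_mul_eq_mul hWA, aeval_diagonal, mulVec_mulVec]
  have hWt : Wᵀᵀ * Wᵀ = 1 := by rwa [transpose_transpose]
  rw [← enorm2_mulVec_of_transpose_mul_self hWt, hcoord,
    ← enorm2_mulVec_of_transpose_mul_self hWt (aeval _ q *ᵥ v), hcoord]
  refine enorm2_le_mul_of_abs_le hC fun i => ?_
  rw [mulVec_diagonal, mulVec_diagonal, abs_mul, abs_mul, ← mul_assoc]
  exact mul_le_mul_of_nonneg_right (hpq i) (abs_nonneg _)

lemma enorm2_inv_mul_inv_sub_one_mulVec (hW1 : Wᵀ * W = 1) (hW2 : W * Wᵀ = 1)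
    {Λ : Matrix (Fin n) (Fin n) ℝ} (hΛ : IsUnit Λ.det)
    (hΛ1 : IsUnit (Λ - 1).det) (v : Fin n → ℝ) :
    enorm2 ((Λ * (Λ - 1)⁻¹)⁻¹ *ᵥ (Wᵀ *ᵥ ((W * Λ * Wᵀ) *ᵥ v))) =
      enorm2 ((W * Λ * Wᵀ - 1) *ᵥ v) := by
  have hWA : Wᵀ * (W * Λ * Wᵀ) = Λ * Wᵀ := by
    rw [← Matrix.mul_assoc, ← Matrix.mul_assoc, hW1, Matrix.one_mul]
  have key : (Λ * (Λ - 1)⁻¹)⁻¹ * (Wᵀ * (W * Λ * Wᵀ)) = Wᵀ * (W * Λ * Wᵀ - 1) := by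
    rw [Matrix.mul_inv_rev, nonsing_inv_nonsing_inv _ hΛ1, hWA, Matrix.mul_sub, hWA,
      Matrix.mul_one, Matrix.mul_assoc, ← Matrix.mul_assoc Λ⁻¹, nonsing_inv_mul _ hΛ,
      Matrix.one_mul, Matrix.sub_mul, Matrix.one_mul]
  have hWt : Wᵀᵀ * Wᵀ = 1 := by rwa [transpose_transpose]
  rw [mulVec_mulVec, mulVec_mulVec, Matrix.mul_assoc, key, ← mulVec_mulVec,
    enorm2_mulVec_of_transpose_mul_self hWt]

end OrthogonalDiagonalization

section FixedPointIteration

variable {R ι : Type*} [CommRing R] [Fintype ι] {A : Matrix ι ι R} {rhs : ι → R}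
  {x f : ℕ → ι → R}

lemma residual_succ_eq_mulVec (hf : ∀ j, f j = A *ᵥ x j + rhs - x j) {j : ℕ}
    (hx : x (j + 1) = A *ᵥ x j + rhs) : f (j + 1) = A *ᵥ f j := by
  rw [hf, hf, hx, mulVec_sub, mulVec_add]
  abel

lemma residual_add_eq_pow_mulVec [DecidableEq ι] (hf : ∀ j, f j = A *ᵥ x j + rhs - x j) {k : ℕ}
    (hx : ∀ j < k, x (j + 1) = A *ᵥ x j + rhs) (i : ℕ) :
    ∀ l, i + l ≤ k → f (i + l) = A ^ l *ᵥ f i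
  | 0, _ => by rw [add_zero, pow_zero, one_mulVec]
  | l + 1, h => by
    rw [← add_assoc, residual_succ_eq_mulVec hf (hx _ (by omega)),
      residual_add_eq_pow_mulVec hf hx i l (by omega), mulVec_mulVec, pow_succ']

lemma of_residual_sub_eq_sub_one_mul [DecidableEq ι] (hf : ∀ j, f j = A *ᵥ x j + rhs - x j)
    (s m : ℕ) :
    (of fun i (l : Fin m) => f (s + l + 1) i - f (s + l) i) =
      (A - 1) * of fun i (l : Fin m) => x (s + l + 1) i - x (s + l) i := by
  have hf' (j : ℕ) : f j = (A - 1) *ᵥ x j + rhs := by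
    rw [hf, sub_mulVec, one_mulVec, sub_add_eq_add_sub]
  ext i l
  simp only [of_apply, hf', Pi.add_apply, add_sub_add_right_eq_sub, mul_apply, mulVec,
    dotProduct, ← Finset.sum_sub_distrib, mul_sub]

lemma of_residual_sub_eq_of_pow_mulVec [DecidableEq ι] (hf : ∀ j, f j = A *ᵥ x j + rhs - x j)
    {k m : ℕ} (hx : ∀ j < k, x (j + 1) = A *ᵥ x j + rhs) (hmk : m ≤ k) :
    (of fun i (l : Fin m) => f (k - m + l + 1) i - f (k - m + l) i) =
      of fun i (l : Fin m) =>
        (A ^ ((l : ℕ) + 1) *ᵥ f (k - m)) i - (A ^ (l : ℕ) *ᵥ f (k - m)) i := by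
  ext i l
  rw [of_apply, of_apply, ← residual_add_eq_pow_mulVec hf hx _ _ (by omega),
    ← residual_add_eq_pow_mulVec hf hx _ _ (by omega)]
  rfl

end FixedPointIteration

lemma anderson_step_error {R ι κ : Type*} [CommRing R] [Fintype ι] [Fintype κ] [DecidableEq ι]
    {A : Matrix ι ι R} {D X : Matrix ι κ R} {G : Matrix κ ι R} {x xnew xstar f : ι → R}
    (hD : D = (A - 1) * X) (hf : f = (A - 1) *ᵥ (x - xstar))
    (hnew : xnew = x + (1 - (D + X) * G) *ᵥ f) :
    xnew - xstar = A *ᵥ (x - xstar - X *ᵥ (G *ᵥ f)) ∧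
      f - D *ᵥ (G *ᵥ f) = (A - 1) *ᵥ (x - xstar - X *ᵥ (G *ᵥ f)) := by
  have hDX : D + X = A * X := by rw [hD, Matrix.sub_mul, Matrix.one_mul, sub_add_cancel]
  set γ := G *ᵥ f
  refine ⟨?_, by rw [hD, mulVec_sub, ← mulVec_mulVec, hf]⟩
  have hnew' : xnew = x + f - A *ᵥ (X *ᵥ γ) := by
    rw [hnew, sub_mulVec, one_mulVec, hDX, ← mulVec_mulVec, ← mulVec_mulVec, add_sub_assoc]
  rw [hnew', hf]
  simp only [sub_mulVec, one_mulVec, mulVec_sub]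
  abel

theorem stmt4_general {n m k : ℕ} (hmk : m ≤ k) (a b : ℝ) (hab : a < b)
    (h0 : (0 : ℝ) ∉ Set.Icc a b) (h1 : (1 : ℝ) ∉ Set.Icc a b)
    (W Λ A : Matrix (Fin n) (Fin n) ℝ) (d : Fin n → ℝ)
    (hΛ : Λ = Matrix.diagonal d)
    (hW1 : Wᵀ * W = 1) (hW2 : W * Wᵀ = 1)
    (hA : A = W * Λ * Wᵀ)
    (hd : ∀ i, d i ∈ Set.Icc a b)
    (rhs xstar : Fin n → ℝ) (hfix : xstar = A.mulVec xstar + rhs)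
    (x : ℕ → Fin n → ℝ)
    (hx : ∀ j < k, x (j + 1) = A.mulVec (x j) + rhs)
    (f : ℕ → Fin n → ℝ)
    (hf : ∀ j, f j = A.mulVec (x j) + rhs - x j)
    (Dk Xk : Matrix (Fin n) (Fin m) ℝ)
    (hDk : Dk = Matrix.of fun i (l : Fin m) => f (k - m + l + 1) i - f (k - m + l) i)
    (hXk : Xk = Matrix.of fun i (l : Fin m) => x (k - m + l + 1) i - x (k - m + l) i)
    (hDkinv : IsUnit (Dkᵀ * Dk).det)
    (Sk : Matrix (Fin n) (Fin n) ℝ)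
    (hSk : Sk = (Dk + Xk) * (Dkᵀ * Dk)⁻¹ * Dkᵀ)
    (hxk1 : x (k + 1) = x k + (1 - Sk).mulVec (f k))
    (Dμ : Matrix (Fin n) (Fin n) ℝ)
    (hDμ : Dμ = Λ * (Λ - 1)⁻¹) :
    enorm2 (Dμ⁻¹.mulVec (Wᵀ.mulVec (x (k + 1) - xstar))) ≤
      |(Polynomial.Chebyshev.T ℝ m).eval ((2 * a * b - a - b) / (b - a))|⁻¹ *
        enorm2 (Dμ⁻¹.mulVec (Wᵀ.mulVec (A.mulVec (x k - xstar)))) := by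
  subst hΛ hA hDμ hSk
  have hΛ : IsUnit (diagonal d).det := by
    simpa [det_diagonal, Finset.prod_ne_zero_iff] using fun i (h : d i = 0) => h0 (h ▸ hd i)
  have hΛ1 : IsUnit (diagonal d - 1).det := by
    simpa [← diagonal_one, det_diagonal, Finset.prod_ne_zero_iff, sub_eq_zero]
      using fun i (h : d i = 1) => h1 (h ▸ hd i)
  have hfe (j : ℕ) : f j = (W * diagonal d * Wᵀ - 1) *ᵥ (x j - xstar) := by
    rw [hf, sub_mulVec, one_mulVec, mulVec_sub, eq_sub_of_add_eq hfix.symm]; abel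
  obtain ⟨hnew, hres⟩ := anderson_step_error (hDk ▸ hXk ▸ of_residual_sub_eq_sub_one_mul hf _ m)
    (hfe k) (hxk1.trans (by rw [Matrix.mul_assoc]))
  have hfk : f k = (W * diagonal d * Wᵀ) ^ m *ᵥ f (k - m) := by
    simpa [Nat.sub_add_cancel hmk] using residual_add_eq_pow_mulVec hf hx (k - m) m (by omega)
  obtain ⟨P, hPdeg, hP1, hPb⟩ := exists_natDegree_le_eval_one_abs_eval_le hab h0 h1 m
  obtain ⟨c, hc⟩ := exists_pow_mulVec_sub_eq_aeval_mulVec _ (f (k - m)) hPdeg hP1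
  rw [← of_residual_sub_eq_of_pow_mulVec hf hx hmk, ← hDk, ← hfk] at hc
  rw [hnew, enorm2_inv_mul_inv_sub_one_mulVec hW1 hW2 hΛ hΛ1, ← hres,
    enorm2_inv_mul_inv_sub_one_mulVec hW1 hW2 hΛ hΛ1, ← hfe]
  calc _ ≤ enorm2 (f k - Dk *ᵥ c) := enorm2_sub_mulVec_leastSquares_le Dk hDkinv _ c
    _ = enorm2 (aeval (W * diagonal d * Wᵀ) P *ᵥ f (k - m)) := by rw [hc]
    _ ≤ |(Chebyshev.T ℝ m).eval ((2 * a * b - a - b) / (b - a))|⁻¹ *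
          enorm2 (aeval (W * diagonal d * Wᵀ) (X ^ m) *ᵥ f (k - m)) :=
      enorm2_aeval_mulVec_le_of_abs_eval_le hW1 hW2 (by positivity)
        (fun i => by simpa using hPb _ (hd i)) _
    _ = _ := by rw [map_pow, aeval_X, ← hfk]

/-- One-step Anderson acceleration error bound:
`‖D_μ⁻¹ Wᵀ e_{k+1}‖₂ ≤ C(a,b,m) ‖D_μ⁻¹ Wᵀ A e_k‖₂` with
`C(a,b,m) = |T_m((2ab - a - b)/(b - a))|⁻¹`. -/
theorem stmt4 {n m k : ℕ} (hm : 0 < m) (hmk : m ≤ k) (a b : ℝ) (hab : a < b)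
    (h0 : (0 : ℝ) ∉ Set.Icc a b) (h1 : (1 : ℝ) ∉ Set.Icc a b)
    (W Λ A : Matrix (Fin n) (Fin n) ℝ) (d : Fin n → ℝ)
    (hΛ : Λ = Matrix.diagonal d)
    (hW1 : Wᵀ * W = 1) (hW2 : W * Wᵀ = 1)
    (hA : A = W * Λ * Wᵀ)
    (hd : ∀ i, d i ∈ Set.Icc a b)
    (rhs xstar : Fin n → ℝ) (hfix : xstar = A.mulVec xstar + rhs)
    (x : ℕ → Fin n → ℝ)
    (hx : ∀ j < k, x (j + 1) = A.mulVec (x j) + rhs)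
    (f : ℕ → Fin n → ℝ)
    (hf : ∀ j, f j = A.mulVec (x j) + rhs - x j)
    (Dk Xk : Matrix (Fin n) (Fin m) ℝ)
    (hDk : Dk = Matrix.of fun i (l : Fin m) => f (k - m + l + 1) i - f (k - m + l) i)
    (hXk : Xk = Matrix.of fun i (l : Fin m) => x (k - m + l + 1) i - x (k - m + l) i)
    (hDkinv : IsUnit (Dkᵀ * Dk).det)
    (Sk : Matrix (Fin n) (Fin n) ℝ)
    (hSk : Sk = (Dk + Xk) * (Dkᵀ * Dk)⁻¹ * Dkᵀ)
    (hxk1 : x (k + 1) = x k + (1 - Sk).mulVec (f k))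
    (Dμ : Matrix (Fin n) (Fin n) ℝ)
    (hDμ : Dμ = Λ * (Λ - 1)⁻¹) :
    enorm2 (Dμ⁻¹.mulVec (Wᵀ.mulVec (x (k + 1) - xstar))) ≤
      |(Polynomial.Chebyshev.T ℝ m).eval ((2 * a * b - a - b) / (b - a))|⁻¹ *
        enorm2 (Dμ⁻¹.mulVec (Wᵀ.mulVec (A.mulVec (x k - xstar)))) :=
  stmt4_general hmk a b hab h0 h1 W Λ A d hΛ hW1 hW2 hA hd rhs xstar hfix x hx f hf Dk Xk hDk hXk
    hDkinv Sk hSk hxk1 Dμ hDμ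
end

section
/- Let [a,b] be an interval not containing 1, with 0 < a < b or a < b < 0 or any interval avoiding 0 and 1. Then min over polynomials q of degree ≤ m with q(1) = 1 of max_{x ∈ [1/b, 1/a]} |q(x)| is at most |T_m((2ab − a − b)/(b − a))|⁻¹, where T_m is the Chebyshev polynomial of degree m. -/
open Polynomial Polynomial.Chebyshev

private lemma natDegree_T_le' : ∀ n : ℕ, (T ℝ (n : ℤ)).natDegree ≤ n := by
  have key : ∀ n : ℕ, (T ℝ (n : ℤ)).natDegree ≤ n ∧ (T ℝ ((n : ℤ) + 1)).natDegree ≤ n + 1 := by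
    intro n
    induction n with
    | zero => simp [T_zero, T_one]
    | succ k ih =>
      refine ⟨by exact_mod_cast ih.2, ?_⟩
      have h2 : ((k + 1 : ℕ) : ℤ) + 1 = (k : ℤ) + 2 := by push_cast; ring
      rw [h2, T_add_two]
      refine le_trans (natDegree_sub_le _ _) (max_le ?_ ?_)
      · refine le_trans (natDegree_mul_le) ?_
        have h3 : (2 * X : ℝ[X]).natDegree ≤ 1 := by
          simpa using natDegree_C_mul_le (2 : ℝ) X
        have h4 := ih.2
        omega
      · exact le_trans ih.1 (by omega)
  exact fun n => (key n).1

private lemma T_eval_ge_one (y : ℝ) (hy : 1 ≤ y) :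
    ∀ n : ℕ, 1 ≤ (T ℝ (n : ℤ)).eval y := by
  have key : ∀ n : ℕ, 1 ≤ (T ℝ (n : ℤ)).eval y ∧
      (T ℝ (n : ℤ)).eval y ≤ (T ℝ ((n : ℤ) + 1)).eval y := by
    intro n
    induction n with
    | zero => simp [T_zero, T_one]; linarith
    | succ k ih =>
      obtain ⟨h1, h2⟩ := ih
      have h3 : ((k + 1 : ℕ) : ℤ) + 1 = (k : ℤ) + 2 := by push_cast; ring
      constructor
      · have h4 : ((k + 1 : ℕ) : ℤ) = (k : ℤ) + 1 := by push_cast; ring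
        rw [h4]; exact le_trans h1 h2
      · rw [h3, T_add_two]
        have h4 : ((k + 1 : ℕ) : ℤ) = (k : ℤ) + 1 := by push_cast; ring
        rw [h4]
        simp only [eval_sub, eval_mul, eval_ofNat, eval_X]
        nlinarith
  exact fun n => (key n).1

private lemma T_eval_neg' (y : ℝ) : ∀ n : ℕ,
    (T ℝ (n : ℤ)).eval (-y) = (-1) ^ n * (T ℝ (n : ℤ)).eval y := by
  have key : ∀ n : ℕ, (T ℝ (n : ℤ)).eval (-y) = (-1) ^ n * (T ℝ (n : ℤ)).eval y ∧
      (T ℝ ((n : ℤ) + 1)).eval (-y) = (-1) ^ (n + 1) * (T ℝ ((n : ℤ) + 1)).eval y := by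
    intro n
    induction n with
    | zero => simp [T_zero, T_one]
    | succ k ih =>
      obtain ⟨h1, h2⟩ := ih
      have h4 : ((k + 1 : ℕ) : ℤ) = (k : ℤ) + 1 := by push_cast; ring
      refine ⟨by rw [h4]; exact h2, ?_⟩
      have h3 : ((k + 1 : ℕ) : ℤ) + 1 = (k : ℤ) + 2 := by push_cast; ring
      rw [h3, T_add_two]
      simp only [eval_sub, eval_mul, eval_ofNat, eval_X]
      rw [h1, h2]
      ring
  exact fun n => (key n).1

private lemma abs_T_eval_ge_one (y : ℝ) (hy : 1 ≤ |y|) (n : ℕ) :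
    1 ≤ |(T ℝ (n : ℤ)).eval y| := by
  rcases le_or_gt 1 y with h | h
  · have := T_eval_ge_one y h n
    rw [abs_of_nonneg (by linarith)]; exact this
  · have hy' : 1 ≤ -y := by
      rcases abs_cases y with ⟨h1, _⟩ | ⟨h1, _⟩ <;> linarith
    have := T_eval_ge_one (-y) hy' n
    rw [show y = -(-y) by ring, T_eval_neg' (-y) n, abs_mul, abs_pow, abs_neg, abs_one,
      one_pow, one_mul, abs_of_nonneg (by linarith)]
    exact this

private lemma abs_T_eval_le_one (y : ℝ) (hy : y ∈ Set.Icc (-1 : ℝ) 1) (n : ℕ) :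
    |(T ℝ (n : ℤ)).eval y| ≤ 1 := by
  have h := Real.cos_arccos hy.1 hy.2
  rw [← h, T_real_cos]
  exact Real.abs_cos_le_one _

/-- There is a polynomial `q` of degree ≤ m with `q(1) = 1` whose sup-norm on
`[1/b, 1/a]` is at most `|T_m((2ab - a - b)/(b - a))|⁻¹`. -/
theorem stmt5 (a b : ℝ) (m : ℕ) (hab : a < b)
    (h0 : (0 : ℝ) ∉ Set.Icc a b) (h1 : (1 : ℝ) ∉ Set.Icc a b) :
    ∃ q : Polynomial ℝ, q.natDegree ≤ m ∧ q.eval 1 = 1 ∧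
      ∀ x ∈ Set.Icc (1 / b) (1 / a), |q.eval x| ≤
        |(Polynomial.Chebyshev.T ℝ m).eval ((2 * a * b - a - b) / (b - a))|⁻¹ := by
  simp only [Set.mem_Icc, not_and, not_le] at h0 h1
  have hab' : b - a > 0 := by linarith
  have hcase : (0 < a ∧ 0 < b) ∨ (a < 0 ∧ b < 0) := by
    rcases lt_trichotomy a 0 with h | h | h
    · exact Or.inr ⟨h, h0 h.le⟩
    · have := h0 h.le; exact Or.inr ⟨by linarith, this⟩
    · exact Or.inl ⟨h, by linarith⟩
  have ha0 : a ≠ 0 := by rcases hcase with ⟨h, _⟩ | ⟨h, _⟩ <;> linarith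
  have hb0 : b ≠ 0 := by rcases hcase with ⟨_, h⟩ | ⟨_, h⟩ <;> linarith
  have hd : 1 / a - 1 / b > 0 := by
    rw [div_sub_div _ _ ha0 hb0]
    rcases hcase with ⟨h1', h2'⟩ | ⟨h1', h2'⟩
    · exact div_pos (by linarith) (by positivity)
    · exact div_pos (by linarith) (by nlinarith)
  set y0 : ℝ := (2 * a * b - a - b) / (b - a) with hy0
  have hy0abs : 1 ≤ |y0| := by
    have hone : (1:ℝ) < a ∨ b < 1 := by
      rcases lt_or_ge 1 a with h | h
      · exact Or.inl h
      · exact Or.inr (h1 h)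
    rcases hcase with ⟨hpa, hpb⟩ | ⟨hna, hnb⟩
    · rcases hone with h | h
      · have : 1 ≤ y0 := by
          rw [hy0, le_div_iff₀ hab']; nlinarith
        rw [abs_of_nonneg (by linarith)]; exact this
      · have : y0 ≤ -1 := by
          rw [hy0, div_le_iff₀ hab']; nlinarith
        rw [abs_of_nonpos (by linarith)]; linarith
    · have : 1 ≤ y0 := by
        rw [hy0, le_div_iff₀ hab']; nlinarith
      rw [abs_of_nonneg (by linarith)]; exact this
  have hTne : (T ℝ (m : ℤ)).eval y0 ≠ 0 := by
    intro h
    have := abs_T_eval_ge_one y0 hy0abs m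
    rw [h] at this; simp at this; linarith
  set d : ℝ := 1 / a - 1 / b with hdd
  set α : ℝ := 2 / d with hα
  set β : ℝ := -(1 / a + 1 / b) / d with hβ
  have hdne : d ≠ 0 := ne_of_gt hd
  have hl1 : α * 1 + β = y0 := by
    rw [hα, hβ, hy0, hdd]
    field_simp
    ring
  refine ⟨C ((T ℝ (m : ℤ)).eval y0)⁻¹ * (T ℝ (m : ℤ)).comp (C α * X + C β), ?_, ?_, ?_⟩
  · calc (C ((T ℝ (m : ℤ)).eval y0)⁻¹ * (T ℝ (m : ℤ)).comp (C α * X + C β)).natDegree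
        ≤ ((T ℝ (m : ℤ)).comp (C α * X + C β)).natDegree := natDegree_C_mul_le _ _
      _ ≤ (T ℝ (m : ℤ)).natDegree * (C α * X + C β).natDegree := natDegree_comp_le
      _ ≤ m * 1 := Nat.mul_le_mul (natDegree_T_le' m) (natDegree_linear_le)
      _ = m := by ring
  · simp only [eval_mul, eval_C, eval_comp, eval_add, eval_X, hl1]
    exact inv_mul_cancel₀ hTne
  · intro x hx
    obtain ⟨hx1, hx2⟩ := hx
    have hlx : α * x + β ∈ Set.Icc (-1 : ℝ) 1 := by
      have he1 : α * x + β + 1 = (2 * x - 1 / a - 1 / b + d) / d := by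
        rw [hα, hβ]; field_simp; ring
      have he2 : 1 - (α * x + β) = (d - (2 * x - 1 / a - 1 / b)) / d := by
        rw [hα, hβ]; field_simp; ring
      constructor
      · have : 0 ≤ α * x + β + 1 := by
          rw [he1]
          apply div_nonneg _ hd.le
          rw [hdd]; linarith
        linarith
      · have : 0 ≤ 1 - (α * x + β) := by
          rw [he2]
          apply div_nonneg _ hd.le
          rw [hdd]; linarith
        linarith
    have hTle := abs_T_eval_le_one _ hlx m
    simp only [eval_mul, eval_C, eval_comp, eval_add, eval_X]
    rw [abs_mul, abs_inv]
    calc |(T ℝ (m : ℤ)).eval y0|⁻¹ * |(T ℝ (m : ℤ)).eval (α * x + β)|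
        ≤ |(T ℝ (m : ℤ)).eval y0|⁻¹ * 1 := by
          apply mul_le_mul_of_nonneg_left hTle
          positivity
      _ = |(T ℝ (m : ℤ)).eval y0|⁻¹ := mul_one _
end

section
/- Let x* > 1 (or x* < −1). Then for every polynomial p of degree at most m with |p(x)| ≤ 1 for all x ∈ [−1,1], one has |p(x*)| ≤ |T_m(x*)|, where T_m is the Chebyshev polynomial of degree m. -/
/-!
If `|p x*| > |T_m x*|`, put `c = T_m x* / p x*`, so `|c| < 1`. Then `q = T_m - c p` has degree
at most `m`, vanishes at `x*`, and at the `m + 1` extremal points `cos (k π / m)` of `T_m` it has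
the strict sign `(-1)^k` of `T_m` there. By the intermediate value theorem `q` has `m` distinct zeros
inside `(-1, 1)`, so together with `x*` it has `m + 1` zeros and must vanish, contradicting
`q 1 > 0`.
-/

open Polynomial Polynomial.Chebyshev Real Set

theorem exists_zero_Ioo_of_neg_one_pow_mul_pos {f : ℝ → ℝ} (hf : Continuous f) {a b : ℝ}
    (hab : a ≤ b) {k : ℕ} (hb : 0 < (-1) ^ k * f b) (ha : 0 < (-1) ^ (k + 1) * f a) :
    ∃ c ∈ Ioo a b, f c = 0 := by
  rw [pow_succ] at ha
  rcases k.even_or_odd with hk | hk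
  · rw [hk.neg_one_pow] at ha hb
    exact intermediate_value_Ioo hab hf.continuousOn ⟨by linarith, by linarith⟩
  · rw [hk.neg_one_pow] at ha hb
    exact intermediate_value_Ioo' hab hf.continuousOn ⟨by linarith, by linarith⟩

theorem exists_strictAnti_zeros_of_alternating {f : ℝ → ℝ} (hf : Continuous f) {n : ℕ}
    {x : ℕ → ℝ} (hx : StrictAntiOn x (Iic n)) (hsign : ∀ k ≤ n, 0 < (-1) ^ k * f (x k)) :
    ∃ r : Fin n → ℝ, StrictAnti r ∧ ∀ i, r i ∈ Ioo (x n) (x 0) ∧ f (r i) = 0 := by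
  have hstep (i : Fin n) : ∃ c ∈ Ioo (x (i + 1)) (x i), f c = 0 :=
    exists_zero_Ioo_of_neg_one_pow_mul_pos hf
      (hx (mem_Iic.2 i.is_lt.le) (mem_Iic.2 i.is_lt) (Nat.lt_succ_self i)).le
      (hsign i i.is_lt.le) (hsign (i + 1) i.is_lt)
  choose r hr hzero using hstep
  have hx_anti : AntitoneOn x (Iic n) := hx.antitoneOn
  refine ⟨r, fun i j hij => ?_, fun i => ⟨⟨?_, ?_⟩, hzero i⟩⟩
  · calc r j < x j := (hr j).2
      _ ≤ x (i + 1) := hx_anti (mem_Iic.2 i.is_lt) (mem_Iic.2 j.is_lt.le) hij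
      _ < r i := (hr i).1
  · calc x n ≤ x (i + 1) := hx_anti (mem_Iic.2 i.is_lt) (mem_Iic.2 le_rfl) i.is_lt
      _ < r i := (hr i).1
  · calc r i < x i := (hr i).2
      _ ≤ x 0 := hx_anti (mem_Iic.2 (Nat.zero_le n)) (mem_Iic.2 i.is_lt.le) (Nat.zero_le i)

theorem Polynomial.eval_ne_zero_of_alternating {q : ℝ[X]} {n : ℕ} (hdeg : q.natDegree ≤ n)
    {x : ℕ → ℝ} (hx : StrictAntiOn x (Iic n)) (hsign : ∀ k ≤ n, 0 < (-1) ^ k * q.eval (x k))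
    {y : ℝ} (hy : y ∉ Ioo (x n) (x 0)) : q.eval y ≠ 0 := by
  obtain ⟨r, hr_anti, hr⟩ := exists_strictAnti_zeros_of_alternating q.continuous hx hsign
  intro hy0
  have hy_new : y ∉ range r := by
    rintro ⟨i, rfl⟩
    exact hy (hr i).1
  have hq : q = 0 := by
    refine eq_zero_of_natDegree_lt_card_of_eval_eq_zero q
      (Fin.cons_injective_iff.2 ⟨hy_new, hr_anti.injective⟩) (fun i => ?_) (by simpa using hdeg)
    cases i using Fin.cases with
    | zero => exact hy0
    | succ i => exact (hr i).2
  simpa [hq] using hsign 0 (Nat.zero_le n)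

noncomputable def chebyshevExtremum (m k : ℕ) : ℝ := cos (k * π / m)

theorem chebyshevExtremum_mem_Icc (m k : ℕ) : chebyshevExtremum m k ∈ Icc (-1) 1 :=
  ⟨neg_one_le_cos _, cos_le_one _⟩

theorem strictAntiOn_chebyshevExtremum (m : ℕ) : StrictAntiOn (chebyshevExtremum m) (Iic m) := by
  intro j hj k hk hjk
  have hm : (0 : ℝ) < m := by exact_mod_cast (hjk.trans_le hk).bot_lt
  have hangle {i : ℕ} (hi : i ∈ Iic m) : (i * π / m : ℝ) ∈ Icc 0 π := by
    refine ⟨by positivity, (div_le_iff₀ hm).2 ?_⟩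
    rw [mul_comm]
    exact mul_le_mul_of_nonneg_left (by exact_mod_cast hi) pi_pos.le
  refine strictAntiOn_cos (hangle hj) (hangle hk) ?_
  gcongr

theorem T_eval_chebyshevExtremum {m k : ℕ} (hk : k ≤ m) :
    (T ℝ m).eval (chebyshevExtremum m k) = (-1) ^ k := by
  rcases Nat.eq_zero_or_pos m with rfl | hm
  · obtain rfl := Nat.le_zero.1 hk
    simp [chebyshevExtremum]
  · have hangle : ((m : ℤ) : ℝ) * (k * π / m) = k * π := by
      push_cast
      field_simp
    rw [chebyshevExtremum, T_real_cos, hangle, cos_nat_mul_pi]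

/-- Chebyshev extremal growth: if `|p| ≤ 1` on `[-1,1]` and `deg p ≤ m`, then
`|p(x*)| ≤ |T_m(x*)|` for `|x*| > 1`. -/
theorem stmt7 (m : ℕ) (xs : ℝ) (hxs : 1 < |xs|)
    (p : Polynomial ℝ) (hdeg : p.natDegree ≤ m)
    (hp : ∀ x ∈ Set.Icc (-1 : ℝ) 1, |p.eval x| ≤ 1) :
    |p.eval xs| ≤ |(Polynomial.Chebyshev.T ℝ m).eval xs| := by
  by_contra! hlt
  have hpxs : p.eval xs ≠ 0 := abs_pos.1 ((abs_nonneg _).trans_lt hlt)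
  set c := (T ℝ m).eval xs / p.eval xs
  have hc : |c| < 1 := by rwa [abs_div, div_lt_one (abs_pos.2 hpxs)]
  set q := T ℝ m - C c * p
  have hq_deg : q.natDegree ≤ m :=
    (natDegree_sub_le_of_le (natDegree_T ℝ m).le (natDegree_C_mul_le c p)).trans
      (max_le (by simp) hdeg)
  have hq_sign (k : ℕ) (hk : k ≤ m) : 0 < (-1) ^ k * q.eval (chebyshevExtremum m k) := by
    have hcp : |c * p.eval (chebyshevExtremum m k)| < 1 := by
      rw [abs_mul]
      exact mul_lt_one_of_nonneg_of_lt_one_left (abs_nonneg c) hc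
        (hp _ (chebyshevExtremum_mem_Icc m k))
    have hcp' := abs_lt.1 hcp
    simp only [q, eval_sub, eval_mul, eval_C, T_eval_chebyshevExtremum hk]
    rcases neg_one_pow_eq_or ℝ k with h | h <;> rw [h] <;> linarith
  have hxs_out : xs ∉ Ioo (chebyshevExtremum m m) (chebyshevExtremum m 0) := fun h =>
    (abs_lt.2 ⟨(chebyshevExtremum_mem_Icc m m).1.trans_lt h.1,
      h.2.trans_le (chebyshevExtremum_mem_Icc m 0).2⟩).not_gt hxs
  refine eval_ne_zero_of_alternating hq_deg (strictAntiOn_chebyshevExtremum m) hq_sign hxs_out ?_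
  simp only [q, c, eval_sub, eval_mul, eval_C]
  field_simp
  ring
end

section
/- Under the same setup as the one-step AA lemma but with x_{k+1} produced by AA using the weighted norm d(v,w) = ‖P(v − w)‖₂ for a positive definite matrix P (so S̃_k = (X_k + D_k)(D_k*P²D_k)⁻¹D_k*P²), the error satisfies e_{k+1} = W·Ẽ·W*·A·e_k, where Ẽ = D_μ·[I − K_H(K_H*W*P²W K_H)⁻¹K_H*W*P²W]·D_μ⁻¹, with D_μ = Λ(Λ − I)⁻¹, H = (Λ − I)²Λ^{k−m}, and K_H = K_m(Λ, H·W*·e_0). -/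
open Matrix

private lemma colmul8 {n m : ℕ} (M : Matrix (Fin n) (Fin n) ℝ)
    (N : Fin m → Matrix (Fin n) (Fin n) ℝ) (v : Fin n → ℝ) :
    M * (Matrix.of fun i (l : Fin m) => ((N l).mulVec v) i)
      = Matrix.of fun i l => ((M * N l).mulVec v) i := by
  ext i l
  simp [Matrix.mul_apply, Matrix.mulVec, dotProduct, Finset.mul_sum, Finset.sum_mul,
    mul_assoc]
  rw [Finset.sum_comm]

/-- One step of Anderson acceleration in the weighted norm `‖P·‖₂`:
`e_{k+1} = W Ẽ Wᵀ A e_k` with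
`Ẽ = D_μ [I - K_H (K_Hᵀ Wᵀ P² W K_H)⁻¹ K_Hᵀ Wᵀ P² W] D_μ⁻¹`. -/
theorem stmt8 {n m k : ℕ} (hm : 0 < m) (hmk : m ≤ k)
    (P : Matrix (Fin n) (Fin n) ℝ) (hP : P.PosDef)
    (W Λ A : Matrix (Fin n) (Fin n) ℝ) (d : Fin n → ℝ)
    (hΛ : Λ = Matrix.diagonal d)
    (hW1 : Wᵀ * W = 1) (hW2 : W * Wᵀ = 1)
    (hA : A = W * Λ * Wᵀ)
    (hd0 : ∀ i, d i ≠ 0) (hd1 : ∀ i, d i ≠ 1)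
    (b xstar : Fin n → ℝ) (hfix : xstar = A.mulVec xstar + b)
    (x : ℕ → Fin n → ℝ)
    (hx : ∀ j < k, x (j + 1) = A.mulVec (x j) + b)
    (f : ℕ → Fin n → ℝ)
    (hf : ∀ j, f j = A.mulVec (x j) + b - x j)
    (Dk Xk : Matrix (Fin n) (Fin m) ℝ)
    (hDk : Dk = Matrix.of fun i (l : Fin m) => f (k - m + l + 1) i - f (k - m + l) i)
    (hXk : Xk = Matrix.of fun i (l : Fin m) => x (k - m + l + 1) i - x (k - m + l) i)
    (hDkinv : IsUnit (Dkᵀ * (P * P) * Dk).det)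
    (Sk : Matrix (Fin n) (Fin n) ℝ)
    (hSk : Sk = (Xk + Dk) * (Dkᵀ * (P * P) * Dk)⁻¹ * Dkᵀ * (P * P))
    (hxk1 : x (k + 1) = x k + (1 - Sk).mulVec (f k))
    (H Dμ : Matrix (Fin n) (Fin n) ℝ)
    (hH : H = (Λ - 1) ^ 2 * Λ ^ (k - m))
    (hDμ : Dμ = Λ * (Λ - 1)⁻¹)
    (KH : Matrix (Fin n) (Fin m) ℝ)
    (hKH : KH = Matrix.of fun i (j : Fin m) =>
      (Λ ^ (j : ℕ)).mulVec (H.mulVec (Wᵀ.mulVec (x 0 - xstar))) i)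
    (E : Matrix (Fin n) (Fin n) ℝ)
    (hE : E = Dμ * (1 - KH * (KHᵀ * Wᵀ * (P * P) * W * KH)⁻¹ * KHᵀ * Wᵀ * (P * P) * W) * Dμ⁻¹) :
    x (k + 1) - xstar = (W * E * Wᵀ * A).mulVec (x k - xstar) := by
  set e0 : Fin n → ℝ := x 0 - xstar with he0
  have hdiag : ∀ u v : Fin n → ℝ, (∀ i, u i = v i) →
      Matrix.diagonal u = Matrix.diagonal v := fun u v h => by
    rw [funext h]
  have hAx : A.mulVec xstar = xstar - b := by
    rw [eq_sub_iff_add_eq]; exact hfix.symm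
  have he : ∀ j, j ≤ k → x j - xstar = (A ^ j).mulVec e0 := by
    intro j hj
    induction j with
    | zero => simp [he0]
    | succ j ih =>
      have hj' : j < k := hj
      rw [hx j hj', pow_succ', ← Matrix.mulVec_mulVec, ← ih (le_of_lt hj'),
        Matrix.mulVec_sub, hAx]
      abel
  have hfe : ∀ j, j ≤ k → f j = ((A - 1) * A ^ j).mulVec e0 := by
    intro j hj
    rw [hf, ← Matrix.mulVec_mulVec, ← he j hj, Matrix.sub_mulVec, Matrix.one_mulVec,
      Matrix.mulVec_sub, hAx]
    abel
  have hsand : ∀ M N : Matrix (Fin n) (Fin n) ℝ,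
      (W * M * Wᵀ) * (W * N * Wᵀ) = W * (M * N) * Wᵀ := by
    intro M N
    have h1 : W * M * Wᵀ * (W * N * Wᵀ) = W * M * (Wᵀ * W) * (N * Wᵀ) := by
      simp only [Matrix.mul_assoc]
    rw [h1, hW1, Matrix.mul_one]
    simp only [Matrix.mul_assoc]
  have hApow : ∀ p : ℕ, A ^ p = W * Λ ^ p * Wᵀ := by
    intro p
    induction p with
    | zero => simp [hW2]
    | succ p ih => rw [pow_succ, pow_succ, ih, hA, hsand]
  have hA1 : A - 1 = W * (Λ - 1) * Wᵀ := by
    rw [Matrix.mul_sub, Matrix.sub_mul, Matrix.mul_one, hW2, ← hA]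
  -- diagonal computations
  have hΛ1 : Λ - 1 = Matrix.diagonal (fun i => d i - 1) := by
    rw [hΛ, ← diagonal_one, diagonal_sub]
  have hΛ1' : Matrix.diagonal d - 1 = Matrix.diagonal (fun i => d i - 1) := by
    rw [← diagonal_one, diagonal_sub]
  set Linv : Matrix (Fin n) (Fin n) ℝ := Matrix.diagonal (fun i => (d i - 1)⁻¹) with hLinv
  have hΛ1inv : (Λ - 1)⁻¹ = Linv := by
    apply Matrix.inv_eq_right_inv
    rw [hΛ1, hLinv, diagonal_mul_diagonal, ← diagonal_one]
    exact hdiag _ _ fun i => by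
      show (d i - 1) * (d i - 1)⁻¹ = 1
      exact mul_inv_cancel₀ (sub_ne_zero.mpr (hd1 i))
  have hDμd : Dμ = Matrix.diagonal (fun i => d i * (d i - 1)⁻¹) := by
    rw [hDμ, hΛ1inv, hLinv, hΛ, diagonal_mul_diagonal]
  set Dμi : Matrix (Fin n) (Fin n) ℝ := Matrix.diagonal (fun i => (d i - 1) * (d i)⁻¹) with hDμi
  have hDD : Dμ * Dμi = 1 := by
    rw [hDμd, hDμi, diagonal_mul_diagonal, ← diagonal_one]
    exact hdiag _ _ fun i => by
      show d i * (d i - 1)⁻¹ * ((d i - 1) * (d i)⁻¹) = 1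
      field_simp [hd0 i, sub_ne_zero.mpr (hd1 i)]
  have hDμinv : Dμ⁻¹ = Dμi := Matrix.inv_eq_right_inv hDD
  have hDiΛ : Dμi * Λ = Λ - 1 := by
    rw [hΛ1, hDμi, hΛ, diagonal_mul_diagonal]
    exact hdiag _ _ fun i => by
      show (d i - 1) * (d i)⁻¹ * d i = d i - 1
      field_simp [hd0 i]
  have hWDiA : W * (Dμi * (Wᵀ * A)) = A - 1 := by
    have h1 : Wᵀ * (W * Λ * Wᵀ) = Λ * Wᵀ := by
      have h2 : Wᵀ * (W * Λ * Wᵀ) = (Wᵀ * W) * (Λ * Wᵀ) := by simp only [Matrix.mul_assoc]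
      rw [h2, hW1, Matrix.one_mul]
    rw [hA1, hA, h1, ← Matrix.mul_assoc Dμi Λ Wᵀ, hDiΛ]
    simp only [Matrix.mul_assoc]
  -- per-column diagonal identities
  have hΛH : ∀ l : Fin m, Λ ^ (l : ℕ) * H = (Λ - 1) ^ 2 * Λ ^ (k - m + l) := by
    intro l
    simp only [hH, hΛ, hΛ1', diagonal_pow, diagonal_mul_diagonal]
    exact hdiag _ _ fun i => by
      show d i ^ (l : ℕ) * ((d i - 1) ^ 2 * d i ^ (k - m)) = (d i - 1) ^ 2 * d i ^ (k - m + l)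
      rw [pow_add]; ring
  have hDΛH : ∀ l : Fin m, Dμ * (Λ ^ (l : ℕ) * H) = Λ * (Λ - 1) * Λ ^ (k - m + l) := by
    intro l
    simp only [hDμd, hH, hΛ, hΛ1', diagonal_pow, diagonal_mul_diagonal]
    exact hdiag _ _ fun i => by
      show d i * (d i - 1)⁻¹ * (d i ^ (l : ℕ) * ((d i - 1) ^ 2 * d i ^ (k - m)))
          = d i * (d i - 1) * d i ^ (k - m + l)
      rw [pow_add]
      field_simp [sub_ne_zero.mpr (hd1 i)]
  -- KH columns
  have hKH' : KH = Matrix.of fun i (l : Fin m) => ((Λ ^ (l : ℕ) * H * Wᵀ).mulVec e0) i := by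
    rw [hKH]
    congr 1; funext i l
    rw [Matrix.mulVec_mulVec, Matrix.mulVec_mulVec]
  -- per-column sandwich identities
  have hsq : (A - 1) ^ 2 = W * (Λ - 1) ^ 2 * Wᵀ := by
    rw [pow_two, pow_two, hA1, hsand]
  have hc1 : ∀ l : Fin m, W * (Λ ^ (l : ℕ) * H * Wᵀ) = (A - 1) ^ 2 * A ^ (k - m + l) := by
    intro l
    have h : W * (Λ ^ (l : ℕ) * H * Wᵀ) = W * (Λ ^ (l : ℕ) * H) * Wᵀ := by
      simp only [Matrix.mul_assoc]
    rw [h, hΛH l, hsq, hApow, hsand]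
  have hc2 : ∀ l : Fin m, W * (Dμ * (Λ ^ (l : ℕ) * H) * Wᵀ) = A * (A - 1) * A ^ (k - m + l) := by
    intro l
    have h : W * (Dμ * (Λ ^ (l : ℕ) * H) * Wᵀ) = W * (Dμ * (Λ ^ (l : ℕ) * H)) * Wᵀ := by
      simp only [Matrix.mul_assoc]
    rw [h, hDΛH l, hA1, hApow, hA, hsand, hsand]
  -- Dk = W * KH
  have hDkW : Dk = W * KH := by
    rw [hKH', colmul8 W (fun l => Λ ^ (l : ℕ) * H * Wᵀ) e0, hDk]
    congr 1; funext i l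
    have hl1 : k - m + l + 1 ≤ k := by omega
    have hl0 : k - m + l ≤ k := by omega
    rw [hfe _ hl1, hfe _ hl0, hc1 l]
    have key : (A - 1) * A ^ (k - m + (l : ℕ) + 1) - (A - 1) * A ^ (k - m + l)
        = (A - 1) ^ 2 * A ^ (k - m + l) := by
      rw [pow_succ']; noncomm_ring
    rw [← key, Matrix.sub_mulVec]
    rfl
  -- Xk + Dk = W * Dμ * KH
  have hXDk : Xk + Dk = W * Dμ * KH := by
    have hassoc : W * Dμ * KH = W * (Dμ * KH) := by rw [Matrix.mul_assoc]
    rw [hassoc, hKH', colmul8 Dμ (fun l => Λ ^ (l : ℕ) * H * Wᵀ) e0]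
    have hDcols : (Matrix.of fun i (l : Fin m) => ((Dμ * (Λ ^ (l : ℕ) * H * Wᵀ)).mulVec e0) i)
        = Matrix.of fun i (l : Fin m) => ((Dμ * (Λ ^ (l : ℕ) * H) * Wᵀ).mulVec e0) i := by
      congr 1; funext i l
      simp only [Matrix.mul_assoc]
    rw [hDcols, colmul8 W (fun l => Dμ * (Λ ^ (l : ℕ) * H) * Wᵀ) e0, hXk, hDkW, hKH',
      colmul8 W (fun l => Λ ^ (l : ℕ) * H * Wᵀ) e0]
    ext i l
    have hl1 : k - m + l + 1 ≤ k := by omega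
    have hl0 : k - m + l ≤ k := by omega
    simp only [Matrix.add_apply, Matrix.of_apply]
    have h1 := congrFun (he _ hl1) i
    have h0 := congrFun (he _ hl0) i
    simp only [Pi.sub_apply] at h1 h0
    rw [hc1 l, hc2 l]
    have key : A ^ (k - m + (l : ℕ) + 1) - A ^ (k - m + l) + (A - 1) ^ 2 * A ^ (k - m + l)
        = A * (A - 1) * A ^ (k - m + l) := by
      rw [pow_succ']; noncomm_ring
    rw [← key, Matrix.add_mulVec, Matrix.sub_mulVec]
    simp only [Pi.add_apply, Pi.sub_apply]
    linarith [h1, h0]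
  -- Gram matrix
  have hG : Dkᵀ * (P * P) * Dk = KHᵀ * Wᵀ * (P * P) * W * KH := by
    rw [hDkW, Matrix.transpose_mul]
    simp only [Matrix.mul_assoc]
  set G := KHᵀ * Wᵀ * (P * P) * W * KH with hGdef
  have hSk' : Sk = W * Dμ * KH * G⁻¹ * (KHᵀ * Wᵀ) * (P * P) := by
    rw [hSk, hXDk, hG, hDkW, Matrix.transpose_mul]
  have hfk : f k = (A - 1).mulVec (x k - xstar) := by
    rw [hf, Matrix.sub_mulVec, Matrix.one_mulVec, Matrix.mulVec_sub, hAx]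
    abel
  have hstep : x (k + 1) - xstar = (A - Sk * (A - 1)).mulVec (x k - xstar) := by
    rw [hxk1, hfk, Matrix.mulVec_mulVec]
    have h : A - Sk * (A - 1) = 1 + (1 - Sk) * (A - 1) := by noncomm_ring
    rw [h, Matrix.add_mulVec, Matrix.one_mulVec]
    abel
  have hfinal : W * E * Wᵀ * A = A - Sk * (A - 1) := by
    rw [hE, hDμinv, hSk']
    simp only [Matrix.mul_sub, Matrix.sub_mul, Matrix.mul_one, Matrix.one_mul, Matrix.mul_assoc]
    have c1 : W * (Dμ * (Dμi * (Wᵀ * A))) = A := by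
      rw [← Matrix.mul_assoc Dμ, hDD, Matrix.one_mul, ← Matrix.mul_assoc, hW2, Matrix.one_mul]
    rw [c1, hWDiA]
    simp only [Matrix.mul_sub, Matrix.mul_one]
  rw [hstep, hfinal]
end

section
/- Let A = WΛW* be real symmetric with 0 and 1 not eigenvalues, and suppose the iterates x_0,…,x_k satisfy x_{j+1} = A·x_j + b for j < k with fixed point x*. Then the difference matrix D_k with columns Δf_{k−m+i} = f_{k−m+i+1} − f_{k−m+i} (where f_j = A·x_j + b − x_j), for i = 0,…,m−1, satisfies D_k = W·Λ^{k−m}·(Λ − I)²·K_m(Λ, W*·e_0), and the matrix X_k with columns Δx_{k−m+i} = x_{k−m+i+1} − x_{k−m+i} satisfies X_k = W·Λ^{k−m}·(Λ − I)·K_m(Λ, W*·e_0), where e_0 = x_0 − x* and K_m(Λ, v) = [v, Λv, …, Λ^{m−1}v]. -/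
open Matrix

/-- Explicit Krylov-matrix form of the difference matrices `D_k` and `X_k`:
`D_k = W Λ^{k-m} (Λ - I)² K_m(Λ, Wᵀ e₀)` and `X_k = W Λ^{k-m} (Λ - I) K_m(Λ, Wᵀ e₀)`. -/
theorem stmt10 {n m k : ℕ} (hm : 0 < m) (hmk : m ≤ k)
    (W Λ A : Matrix (Fin n) (Fin n) ℝ) (d : Fin n → ℝ)
    (hΛ : Λ = Matrix.diagonal d)
    (hW1 : Wᵀ * W = 1) (hW2 : W * Wᵀ = 1)
    (hA : A = W * Λ * Wᵀ)
    (hd0 : ∀ i, d i ≠ 0) (hd1 : ∀ i, d i ≠ 1)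
    (b xstar : Fin n → ℝ) (hfix : xstar = A.mulVec xstar + b)
    (x : ℕ → Fin n → ℝ)
    (hx : ∀ j < k, x (j + 1) = A.mulVec (x j) + b)
    (f : ℕ → Fin n → ℝ)
    (hf : ∀ j, f j = A.mulVec (x j) + b - x j)
    (Dk Xk Km : Matrix (Fin n) (Fin m) ℝ)
    (hDk : Dk = Matrix.of fun i (l : Fin m) => f (k - m + l + 1) i - f (k - m + l) i)
    (hXk : Xk = Matrix.of fun i (l : Fin m) => x (k - m + l + 1) i - x (k - m + l) i)
    (hKm : Km = Matrix.of fun i (j : Fin m) =>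
      (Λ ^ (j : ℕ)).mulVec (Wᵀ.mulVec (x 0 - xstar)) i) :
    Dk = W * (Λ ^ (k - m) * (Λ - 1) ^ 2) * Km ∧
    Xk = W * (Λ ^ (k - m) * (Λ - 1)) * Km := by
  set e0 : Fin n → ℝ := x 0 - xstar with he0
  -- conjugation lemma
  have hconj : ∀ M N : Matrix (Fin n) (Fin n) ℝ,
      (W * M * Wᵀ) * (W * N * Wᵀ) = W * (M * N) * Wᵀ := by
    intro M N
    calc (W * M * Wᵀ) * (W * N * Wᵀ) = W * (M * ((Wᵀ * W) * (N * Wᵀ))) := by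
          simp only [Matrix.mul_assoc]
      _ = W * (M * N) * Wᵀ := by rw [hW1]; simp only [Matrix.one_mul, Matrix.mul_assoc]
  have hApow : ∀ p, A ^ p = W * Λ ^ p * Wᵀ := by
    intro p
    induction p with
    | zero => simpa using hW2.symm
    | succ p ih => rw [pow_succ, pow_succ, ih, hA, hconj]
  have hAm1 : A - 1 = W * (Λ - 1) * Wᵀ := by
    rw [hA, Matrix.mul_sub, Matrix.sub_mul, Matrix.mul_one, hW2]
  have hAm1pow : ∀ q, (A - 1) ^ q = W * (Λ - 1) ^ q * Wᵀ := by
    intro q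
    induction q with
    | zero => simpa using hW2.symm
    | succ q ih => rw [pow_succ, pow_succ, ih, hAm1, hconj]
  -- error recursion
  have he : ∀ j, j ≤ k → x j - xstar = (A ^ j).mulVec e0 := by
    intro j
    induction j with
    | zero => intro _; simp [he0]
    | succ j ih =>
      intro hj
      have h1 : x (j + 1) - xstar = A.mulVec (x j - xstar) := by
        calc x (j + 1) - xstar = (A.mulVec (x j) + b) - (A.mulVec xstar + b) := by
              rw [← hfix, hx j (by omega)]
          _ = A.mulVec (x j - xstar) := by rw [Matrix.mulVec_sub]; abel
      rw [h1, ih (by omega), Matrix.mulVec_mulVec, ← pow_succ']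
  -- f in terms of e0
  have hfe : ∀ j, j ≤ k → f j = ((A - 1) * A ^ j).mulVec e0 := by
    intro j hj
    have hb : b = xstar - A.mulVec xstar := by nth_rewrite 1 [hfix]; abel
    have : f j = A.mulVec (x j - xstar) - (x j - xstar) := by
      rw [hf, hb, Matrix.mulVec_sub]; abel
    rw [this, he j hj, Matrix.mulVec_mulVec, Matrix.sub_mul, Matrix.one_mul,
      Matrix.sub_mulVec]
  -- commuting powers of Λ and Λ - 1
  have hc : Commute Λ (Λ - 1) := (Commute.refl Λ).sub_right (Commute.one_right Λ)
  have hcomm : ∀ (q l : ℕ), (Λ - 1) ^ q * Λ ^ (k - m + l)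
      = Λ ^ (k - m) * (Λ - 1) ^ q * Λ ^ l := by
    intro q l
    rw [pow_add, ← Matrix.mul_assoc, (hc.symm.pow_pow q (k - m))]
  -- key column computation
  have key : ∀ (P : Matrix (Fin n) (Fin n) ℝ) (i : Fin n) (l : Fin m),
      (P * Km) i l = ((P * (Λ ^ (l : ℕ) * Wᵀ)).mulVec e0) i := by
    intro P i l
    rw [hKm, ← Matrix.mulVec_mulVec, ← Matrix.mulVec_mulVec]
    simp only [Matrix.mul_apply, Matrix.mulVec, Matrix.of_apply, dotProduct,
      Matrix.mulVec_mulVec]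
  have hlk : ∀ l : Fin m, k - m + (l : ℕ) + 1 ≤ k := by
    intro l; have := l.isLt; omega
  constructor
  · ext i l
    rw [key, hDk]
    have hD : f (k - m + (l : ℕ) + 1) i - f (k - m + (l : ℕ)) i
        = (((A - 1) ^ 2 * A ^ (k - m + (l : ℕ))).mulVec e0) i := by
      rw [hfe _ (hlk l), hfe _ (by have := hlk l; omega)]
      have : (A - 1) ^ 2 * A ^ (k - m + (l : ℕ))
          = (A - 1) * A ^ (k - m + (l : ℕ) + 1) - (A - 1) * A ^ (k - m + (l : ℕ)) := by
        rw [sq, Matrix.mul_assoc, ← Matrix.mul_sub]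
        congr 1
        rw [Matrix.sub_mul, Matrix.one_mul, pow_succ']
      rw [this, Matrix.sub_mulVec]
      simp [Pi.sub_apply]
    rw [Matrix.of_apply, hD]
    congr 1
    rw [hAm1pow, hApow, hconj, hcomm]
    simp only [Matrix.mul_assoc]
  · ext i l
    rw [key, hXk]
    have hX : x (k - m + (l : ℕ) + 1) i - x (k - m + (l : ℕ)) i
        = (((A - 1) ^ 1 * A ^ (k - m + (l : ℕ))).mulVec e0) i := by
      have h1 := he _ (hlk l)
      have h2 := he (k - m + (l : ℕ)) (by have := hlk l; omega)
      have hxe : x (k - m + (l : ℕ) + 1) i - x (k - m + (l : ℕ)) i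
          = (x (k - m + (l : ℕ) + 1) - xstar) i - (x (k - m + (l : ℕ)) - xstar) i := by
        simp [Pi.sub_apply]
      rw [hxe, h1, h2]
      have : (A - 1) ^ 1 * A ^ (k - m + (l : ℕ))
          = A ^ (k - m + (l : ℕ) + 1) - A ^ (k - m + (l : ℕ)) := by
        rw [pow_one, Matrix.sub_mul, Matrix.one_mul, ← pow_succ']
      rw [this, Matrix.sub_mulVec]
      simp [Pi.sub_apply]
    rw [Matrix.of_apply, hX]
    congr 1
    rw [hAm1pow, hApow, hconj, hcomm, pow_one]
    simp only [Matrix.mul_assoc]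
end
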